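/- arXiv:2602.02875 — 2 statements merged into one kernel-verified Lean document; each statement's English description precedes it below -/
import Mathlib

section
/- For all ω > 0 and η > 0, the stress–strength integral of a Shiha strength Y₁ ~ Sh(ω, η) against an exponential stress Y₂ ~ Exp(ω) satisfies ∫₀^∞ f(y; ω, η) (1 − e^{-ωy}) dy = (9ω + 26η) / (18(ω + 3η)). -/
/-!
Both `∫ f` and `∫ f(y) e^{-ωy} dy` are values of the Laplace transform `L(t) = ∫ f(y) e^{-ty} dy`
of the Shiha density, a combination of the integrals `∫₀^∞ (a + b y) e^{-ky} dy = a/k + b/k²` with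
`k = ω + t` and `k = 2ω + t`. As `f` is a probability density, `R = L(0) - L(ω) = 1 - L(ω)`.
-/

open Real MeasureTheory

noncomputable def shihaPdf (ω η y : ℝ) : ℝ :=
  ω / (ω + 3 * η) * (ω + (2 * η + 8 * ω * η * y) * Real.exp (-ω * y)) * Real.exp (-ω * y)

open Set

section AffineExp

variable {k : ℝ} (a b : ℝ)

lemma integrableOn_exp_neg_mul_Ioi (hk : 0 < k) :
    IntegrableOn (fun y : ℝ => exp (-(k * y))) (Ioi 0) := by
  simpa [neg_mul] using integrableOn_exp_mul_Ioi (neg_lt_zero.mpr hk) 0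

lemma integral_exp_neg_mul_Ioi (hk : 0 < k) :
    ∫ y in Ioi (0 : ℝ), exp (-(k * y)) = 1 / k := by
  simpa [neg_div_neg_eq] using integral_exp_mul_Ioi (neg_lt_zero.mpr hk) 0

lemma integrableOn_mul_exp_neg_mul_Ioi (hk : 0 < k) :
    IntegrableOn (fun y : ℝ => y * exp (-(k * y))) (Ioi 0) := by
  refine (integrableOn_rpow_mul_exp_neg_mul_rpow (p := 1) (s := 1) (by norm_num) one_pos
    hk).congr_fun (fun y _ => ?_) measurableSet_Ioi
  simp [neg_mul]

lemma integral_mul_exp_neg_mul_Ioi (hk : 0 < k) :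
    ∫ y in Ioi (0 : ℝ), y * exp (-(k * y)) = 1 / k ^ 2 := by
  have h := integral_rpow_mul_exp_neg_mul_Ioi two_pos hk
  norm_num [Gamma_two] at h
  simpa [div_pow] using h

lemma integrableOn_affine_mul_exp_neg_mul_Ioi (hk : 0 < k) :
    IntegrableOn (fun y : ℝ => (a + b * y) * exp (-(k * y))) (Ioi 0) := by
  simp_rw [add_mul, mul_assoc]
  exact ((integrableOn_exp_neg_mul_Ioi hk).const_mul a).add
    ((integrableOn_mul_exp_neg_mul_Ioi hk).const_mul b)

lemma integral_affine_mul_exp_neg_mul_Ioi (hk : 0 < k) :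
    ∫ y in Ioi (0 : ℝ), (a + b * y) * exp (-(k * y)) = a / k + b / k ^ 2 := by
  simp_rw [add_mul, mul_assoc]
  rw [integral_add ((integrableOn_exp_neg_mul_Ioi hk).const_mul a)
      ((integrableOn_mul_exp_neg_mul_Ioi hk).const_mul b), integral_const_mul,
    integral_const_mul, integral_exp_neg_mul_Ioi hk, integral_mul_exp_neg_mul_Ioi hk]
  ring

end AffineExp

section Laplace

variable (ω η : ℝ) {t : ℝ}

lemma shihaPdf_mul_exp_neg_mul (t y : ℝ) :
    shihaPdf ω η y * exp (-(t * y)) = ω / (ω + 3 * η) *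
      (ω * exp (-((ω + t) * y)) + (2 * η + 8 * ω * η * y) * exp (-((2 * ω + t) * y))) := by
  rw [shihaPdf, show -((ω + t) * y) = -ω * y + -(t * y) by ring,
    show -((2 * ω + t) * y) = -ω * y + -ω * y + -(t * y) by ring, exp_add, exp_add, exp_add]
  ring

lemma integrableOn_shihaPdf_mul_exp_neg_mul (h₁ : 0 < ω + t) (h₂ : 0 < 2 * ω + t) :
    IntegrableOn (fun y => shihaPdf ω η y * exp (-(t * y))) (Ioi 0) := by
  simp_rw [shihaPdf_mul_exp_neg_mul]
  exact (((integrableOn_exp_neg_mul_Ioi h₁).const_mul ω).add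
    (integrableOn_affine_mul_exp_neg_mul_Ioi _ _ h₂)).const_mul _

lemma integral_shihaPdf_mul_exp_neg_mul (h₁ : 0 < ω + t) (h₂ : 0 < 2 * ω + t) :
    ∫ y in Ioi (0 : ℝ), shihaPdf ω η y * exp (-(t * y)) = ω / (ω + 3 * η) *
      (ω / (ω + t) + 2 * η / (2 * ω + t) + 8 * ω * η / (2 * ω + t) ^ 2) := by
  simp_rw [shihaPdf_mul_exp_neg_mul]
  rw [integral_const_mul, integral_add ((integrableOn_exp_neg_mul_Ioi h₁).const_mul ω)
      (integrableOn_affine_mul_exp_neg_mul_Ioi _ _ h₂), integral_const_mul,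
    integral_exp_neg_mul_Ioi h₁, integral_affine_mul_exp_neg_mul_Ioi _ _ h₂]
  ring

end Laplace

section Normalization

variable {ω η : ℝ}

lemma integrableOn_shihaPdf (hω : 0 < ω) : IntegrableOn (shihaPdf ω η) (Ioi 0) := by
  simpa using integrableOn_shihaPdf_mul_exp_neg_mul ω η (t := 0) (by simpa) (by simpa)

lemma integral_shihaPdf (hω : 0 < ω) (hωη : ω + 3 * η ≠ 0) :
    ∫ y in Ioi (0 : ℝ), shihaPdf ω η y = 1 := by
  have h := integral_shihaPdf_mul_exp_neg_mul ω η (t := 0) (by simpa) (by simpa)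
  simp only [zero_mul, neg_zero, exp_zero, mul_one, add_zero] at h
  rw [h]
  field_simp
  ring

end Normalization

theorem shiha_stress_strength_exp_stress (ω η : ℝ) (hω : 0 < ω) (hη : 0 < η) :
    (∫ y in Set.Ioi (0 : ℝ), shihaPdf ω η y * (1 - Real.exp (-ω * y)))
      = (9 * ω + 26 * η) / (18 * (ω + 3 * η)) := by
  have hωt : 0 < ω + ω := by positivity
  have h2ωt : 0 < 2 * ω + ω := by positivity
  simp_rw [mul_one_sub, neg_mul]
  rw [integral_sub (integrableOn_shihaPdf hω) (integrableOn_shihaPdf_mul_exp_neg_mul ω η hωt h2ωt),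
    integral_shihaPdf hω (by positivity), integral_shihaPdf_mul_exp_neg_mul ω η hωt h2ωt]
  field_simp
  ring
end

section
/- For all ω > 0, η > 0 and all real t < ω, the moment generating function of the Shiha distribution satisfies ∫₀^∞ e^{ty} f(y; ω, η) dy = (ω/(ω + 3η)) · [ ω/(ω − t) + 2η/(2ω − t) + 8ωη/(2ω − t)² ], which equals (4ω⁴ + 12ω³η − 4ω³t − 14ω²ηt + ω²t² + 2ωηt²) / ((ω + 3η)(ω − t)(2ω − t)²). -/
open Real MeasureTheory

/-!
Multiplying the density by `exp (t * y)` turns it into a linear combination of the Gamma-type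
integrands `y ^ k * exp (-(r * y))` with `k ∈ {0, 1}` and rates `r = ω - t`, `r = 2 * ω - t`,
both positive when `0 < ω` and `t < ω`. Each integrates to `k ! / r ^ (k + 1)`, and the closed
form is then a rational-function identity.
-/

open Set
open scoped Nat

theorem integral_pow_mul_exp_neg_mul_Ioi (k : ℕ) {r : ℝ} (hr : 0 < r) :
    ∫ y in Ioi (0 : ℝ), y ^ k * exp (-(r * y)) = k ! / r ^ (k + 1) := by
  have h := integral_rpow_mul_exp_neg_mul_Ioi (a := k + 1) (by positivity) hr
  rw [add_sub_cancel_right, Gamma_nat_eq_factorial, div_rpow zero_le_one hr.le, one_rpow] at h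
  rw [← one_div_mul_eq_div]
  exact_mod_cast h

theorem integrableOn_pow_mul_exp_neg_mul_Ioi (k : ℕ) {r : ℝ} (hr : 0 < r) :
    IntegrableOn (fun y : ℝ ↦ y ^ k * exp (-(r * y))) (Ioi 0) :=
  .of_integral_ne_zero (by rw [integral_pow_mul_exp_neg_mul_Ioi k hr]; positivity)

theorem exp_mul_mul_shihaPdf (ω η t y : ℝ) :
    exp (t * y) * shihaPdf ω η y = ω / (ω + 3 * η) *
      (ω * (y ^ 0 * exp (-((ω - t) * y))) + 2 * η * (y ^ 0 * exp (-((2 * ω - t) * y)))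
        + 8 * ω * η * (y ^ 1 * exp (-((2 * ω - t) * y)))) := by
  rw [shihaPdf, show -((ω - t) * y) = t * y + -ω * y by ring,
    show -((2 * ω - t) * y) = t * y + (-ω * y + -ω * y) by ring, exp_add, exp_add, exp_add]
  ring

theorem integral_exp_mul_shihaPdf {ω t : ℝ} (η : ℝ) (hω : 0 < ω) (ht : t < ω) :
    ∫ y in Ioi (0 : ℝ), exp (t * y) * shihaPdf ω η y
      = ω / (ω + 3 * η) *
          (ω / (ω - t) + 2 * η / (2 * ω - t) + 8 * ω * η / (2 * ω - t) ^ 2) := by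
  have h₁ : 0 < ω - t := by linarith
  have h₂ : 0 < 2 * ω - t := by linarith
  have I₁ := integrableOn_pow_mul_exp_neg_mul_Ioi 0 h₁
  have I₂ := integrableOn_pow_mul_exp_neg_mul_Ioi 0 h₂
  have I₃ := integrableOn_pow_mul_exp_neg_mul_Ioi 1 h₂
  simp_rw [exp_mul_mul_shihaPdf]
  rw [integral_const_mul, integral_add ?_ (I₃.const_mul _),
    integral_add (I₁.const_mul _) (I₂.const_mul _), integral_const_mul, integral_const_mul,
    integral_const_mul, integral_pow_mul_exp_neg_mul_Ioi 0 h₁,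
    integral_pow_mul_exp_neg_mul_Ioi 0 h₂, integral_pow_mul_exp_neg_mul_Ioi 1 h₂]
  · simp only [Nat.factorial, Nat.cast_one, zero_add, pow_one, Nat.reduceAdd]
    ring
  · exact (I₁.const_mul _).add (I₂.const_mul _)

theorem mgf_sum_eq_div {K : Type*} [Field K] {ω t : K} (η : K) (h₁ : ω - t ≠ 0)
    (h₂ : 2 * ω - t ≠ 0) :
    ω / (ω + 3 * η) * (ω / (ω - t) + 2 * η / (2 * ω - t) + 8 * ω * η / (2 * ω - t) ^ 2)
      = (4 * ω ^ 4 + 12 * ω ^ 3 * η - 4 * ω ^ 3 * t - 14 * ω ^ 2 * η * t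
          + ω ^ 2 * t ^ 2 + 2 * ω * η * t ^ 2)
        / ((ω + 3 * η) * (ω - t) * (2 * ω - t) ^ 2) := by
  rw [div_mul_eq_mul_div, mul_assoc (ω + 3 * η), mul_comm (ω + 3 * η), ← div_div]
  congr 1
  rw [div_add_div _ _ h₁ h₂, div_add_div _ _ (mul_ne_zero h₁ h₂) (pow_ne_zero 2 h₂),
    mul_div_assoc', div_eq_div_iff (by simp [*]) (by simp [*])]
  ring

theorem shiha_mgf_general (ω η : ℝ) (hω : 0 < ω) (t : ℝ) (ht : t < ω) :
    (∫ y in Set.Ioi (0 : ℝ), Real.exp (t * y) * shihaPdf ω η y)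
      = ω / (ω + 3 * η) *
          (ω / (ω - t) + 2 * η / (2 * ω - t) + 8 * ω * η / (2 * ω - t) ^ 2) ∧
    ω / (ω + 3 * η) * (ω / (ω - t) + 2 * η / (2 * ω - t) + 8 * ω * η / (2 * ω - t) ^ 2)
      = (4 * ω ^ 4 + 12 * ω ^ 3 * η - 4 * ω ^ 3 * t - 14 * ω ^ 2 * η * t
          + ω ^ 2 * t ^ 2 + 2 * ω * η * t ^ 2)
        / ((ω + 3 * η) * (ω - t) * (2 * ω - t) ^ 2) :=
  ⟨integral_exp_mul_shihaPdf η hω ht, mgf_sum_eq_div η (by linarith) (by linarith)⟩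

theorem shiha_mgf (ω η : ℝ) (hω : 0 < ω) (hη : 0 < η) (t : ℝ) (ht : t < ω) :
    (∫ y in Set.Ioi (0 : ℝ), Real.exp (t * y) * shihaPdf ω η y)
      = ω / (ω + 3 * η) *
          (ω / (ω - t) + 2 * η / (2 * ω - t) + 8 * ω * η / (2 * ω - t) ^ 2) ∧
    ω / (ω + 3 * η) * (ω / (ω - t) + 2 * η / (2 * ω - t) + 8 * ω * η / (2 * ω - t) ^ 2)
      = (4 * ω ^ 4 + 12 * ω ^ 3 * η - 4 * ω ^ 3 * t - 14 * ω ^ 2 * η * t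
          + ω ^ 2 * t ^ 2 + 2 * ω * η * t ^ 2)
        / ((ω + 3 * η) * (ω - t) * (2 * ω - t) ^ 2) :=
  shiha_mgf_general ω η hω t ht
end
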